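/- Let G be the group presented by ⟨a, b, c | a² central, b³ = 1, a⁴ = c⁻⁵, abc = 1⟩ and W = ⟨s, t | s³ = t³ = 1, ststs = tstst⟩. Then s ↦ b, t ↦ (ac)⁻¹ extends to a group isomorphism W → G with inverse a ↦ (ststs)⁻¹, b ↦ s, c ↦ tsts. -/

import Mathlib

/-!
For Δ = ststs the braid relation gives Δ² = (st)⁵ = (ts)⁵, so Δ² is central, and
(tsts)⁵ = (ts)¹⁰ = Δ⁴; hence a = Δ⁻¹, b = s, c = tsts satisfy the ER relations, with abc = 1
by construction. Conversely, if a² commutes with c and abc = 1, a⁴c⁵ = 1, put t = (ac)⁻¹: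
then (tb)² = a⁻⁴c⁻⁴ = c, so btbtb = bc = a⁻¹ = ct = tbtbt, while t = aba⁻¹ has order
dividing 3. The same identities show that both composites fix the generators.
-/

namespace Stmt9

inductive GenW | s | t
inductive GenG | a | b | c

open FreeGroup

/-- BMR presentation of G₂₀: ⟨s, t | s³ = t³ = 1, ststs = tstst⟩. -/
def relsW : Set (FreeGroup GenW) :=
  { of GenW.s ^ 3, of GenW.t ^ 3,
    of GenW.s * of GenW.t * of GenW.s * of GenW.t * of GenW.s *
      (of GenW.t * of GenW.s * of GenW.t * of GenW.s * of GenW.t)⁻¹ }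

/-- ER presentation: ⟨a, b, c | a² central, b³ = 1, a⁴ = c⁻⁵, abc = 1⟩. -/
def relsG : Set (FreeGroup GenG) :=
  { of GenG.a ^ 2 * of GenG.b * (of GenG.a ^ 2)⁻¹ * (of GenG.b)⁻¹,
    of GenG.a ^ 2 * of GenG.c * (of GenG.a ^ 2)⁻¹ * (of GenG.c)⁻¹,
    of GenG.b ^ 3,
    of GenG.a ^ 4 * of GenG.c ^ 5,
    of GenG.a * of GenG.b * of GenG.c }

abbrev W := PresentedGroup relsW
abbrev G := PresentedGroup relsG

end Stmt9

theorem PresentedGroup.lift_of_eq_one {α : Type*} {rels : Set (FreeGroup α)} {r : FreeGroup α}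
    (hr : r ∈ rels) : FreeGroup.lift (PresentedGroup.of (rels := rels)) r = 1 := by
  rw [show FreeGroup.lift PresentedGroup.of = PresentedGroup.mk rels from
    FreeGroup.ext_hom _ _ fun _ => FreeGroup.lift_apply_of]
  exact PresentedGroup.one_of_mem hr

namespace Stmt9

variable {H : Type*} [Group H]

structure IsBMR (s t : H) : Prop where
  s_cube : s ^ 3 = 1
  t_cube : t ^ 3 = 1
  braid : s * t * s * t * s = t * s * t * s * t

structure IsER (a b c : H) : Prop where
  commute_sq_middle : Commute (a ^ 2) b
  commute_sq_right : Commute (a ^ 2) c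
  middle_cube : b ^ 3 = 1
  pow_four_mul_pow_five : a ^ 4 * c ^ 5 = 1
  mul_mul : a * b * c = 1

section Braid

variable {s t : H} (h : s * t * s * t * s = t * s * t * s * t)
include h

theorem mul_pow_five_eq_braid_sq : (s * t) ^ 5 = (s * t * s * t * s) ^ 2 := by
  calc (s * t) ^ 5 = (s * t * s * t * s) * (t * s * t * s * t) := by
        simp only [pow_succ, pow_zero, one_mul, mul_assoc]
    _ = (s * t * s * t * s) ^ 2 := by rw [← h, sq]

theorem mul_pow_five_eq_braid_sq' : (t * s) ^ 5 = (s * t * s * t * s) ^ 2 := by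
  calc (t * s) ^ 5 = (t * s * t * s * t) * (s * t * s * t * s) := by
        simp only [pow_succ, pow_zero, one_mul, mul_assoc]
    _ = (s * t * s * t * s) ^ 2 := by rw [← h, sq]

theorem commute_braid_sq_left : Commute ((s * t * s * t * s) ^ 2) s := by
  have hs : SemiconjBy s ((t * s) ^ 5) ((s * t) ^ 5) :=
    SemiconjBy.pow_right (mul_assoc s t s).symm 5
  rw [mul_pow_five_eq_braid_sq h, mul_pow_five_eq_braid_sq' h] at hs
  exact hs.symm

theorem commute_braid_sq_right : Commute ((s * t * s * t * s) ^ 2) t := by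
  have ht : SemiconjBy t ((s * t) ^ 5) ((t * s) ^ 5) :=
    SemiconjBy.pow_right (mul_assoc t s t).symm 5
  rw [mul_pow_five_eq_braid_sq h, mul_pow_five_eq_braid_sq' h] at ht
  exact ht.symm

theorem inv_braid_mul_inv : ((s * t * s * t * s)⁻¹ * (t * s * t * s))⁻¹ = t := by
  rw [h]; group

end Braid

theorem IsBMR.isER {s t : H} (h : IsBMR s t) :
    IsER (s * t * s * t * s)⁻¹ s (t * s * t * s) := by
  have hs := commute_braid_sq_left h.braid
  have ht := commute_braid_sq_right h.braid
  refine ⟨?_, ?_, h.s_cube, ?_, by group⟩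
  · rw [inv_pow]
    exact hs.inv_left
  · rw [inv_pow]
    exact (((ht.mul_right hs).mul_right ht).mul_right hs).inv_left
  · calc (s * t * s * t * s)⁻¹ ^ 4 * (t * s * t * s) ^ 5
        = ((s * t * s * t * s) ^ 2)⁻¹ ^ 2 * ((t * s) ^ 5) ^ 2 := by
          rw [inv_pow, inv_pow, ← pow_mul]
          simp only [pow_succ, pow_zero, one_mul, mul_assoc]
      _ = 1 := by rw [mul_pow_five_eq_braid_sq' h.braid, inv_pow, inv_mul_cancel]

namespace IsER

variable {a b c : H} (h : IsER a b c)
include h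

theorem eq_inv_mul_inv : b = a⁻¹ * c⁻¹ :=
  eq_inv_mul_of_mul_eq (mul_eq_one_iff_eq_inv.mp h.mul_mul)

theorem inv_mul_mul_inv_mul : (a * c)⁻¹ * b * (a * c)⁻¹ * b = c := by
  have hx : Commute (a ^ 2)⁻¹ c⁻¹ := h.commute_sq_right.inv_inv
  have ha4 : (a ^ 4)⁻¹ = c ^ 5 := inv_eq_of_mul_eq_one_right h.pow_four_mul_pow_five
  calc (a * c)⁻¹ * b * (a * c)⁻¹ * b
      = (c⁻¹ * (a ^ 2)⁻¹) * c⁻¹ * (c⁻¹ * (a ^ 2)⁻¹) * c⁻¹ := by rw [h.eq_inv_mul_inv]; group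
    _ = ((a ^ 2)⁻¹ * c⁻¹ ^ 2) ^ 2 := by rw [← hx.eq, sq, sq]; group
    _ = (a ^ 4)⁻¹ * c⁻¹ ^ 4 := by rw [(hx.pow_right 2).mul_pow]; group
    _ = c := by rw [ha4]; group

theorem braid_eq_inv : b * (a * c)⁻¹ * b * (a * c)⁻¹ * b = a⁻¹ := by
  have hbc : b * c = a⁻¹ := eq_inv_of_mul_eq_one_right (by rw [← mul_assoc]; exact h.mul_mul)
  calc b * (a * c)⁻¹ * b * (a * c)⁻¹ * b = b * ((a * c)⁻¹ * b * (a * c)⁻¹ * b) := by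
        simp only [mul_assoc]
    _ = a⁻¹ := by rw [h.inv_mul_mul_inv_mul, hbc]

theorem isBMR : IsBMR b (a * c)⁻¹ := by
  have hconj : (a * c)⁻¹ = a * b * a⁻¹ := by rw [h.eq_inv_mul_inv]; group
  refine ⟨h.middle_cube, ?_, ?_⟩
  · rw [hconj, conj_pow, h.middle_cube]; group
  · rw [h.braid_eq_inv, h.inv_mul_mul_inv_mul]; group

end IsER

theorem forall_relsW_iff (f : GenW → H) :
    (∀ r ∈ relsW, FreeGroup.lift f r = 1) ↔ IsBMR (f .s) (f .t) := by
  simp only [relsW, Set.mem_insert_iff, Set.mem_singleton_iff, forall_eq_or_imp, forall_eq,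
    map_mul, map_pow, map_inv, FreeGroup.lift_apply_of, mul_inv_eq_one]
  exact ⟨fun ⟨h₁, h₂, h₃⟩ => ⟨h₁, h₂, h₃⟩, fun ⟨h₁, h₂, h₃⟩ => ⟨h₁, h₂, h₃⟩⟩

theorem forall_relsG_iff (f : GenG → H) :
    (∀ r ∈ relsG, FreeGroup.lift f r = 1) ↔ IsER (f .a) (f .b) (f .c) := by
  simp only [relsG, Set.mem_insert_iff, Set.mem_singleton_iff, forall_eq_or_imp, forall_eq,
    map_mul, map_pow, FreeGroup.lift_apply_of, ← commutatorElement_def,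
    map_commutatorElement, commutatorElement_eq_one_iff_commute]
  exact ⟨fun ⟨h₁, h₂, h₃, h₄, h₅⟩ => ⟨h₁, h₂, h₃, h₄, h₅⟩,
    fun ⟨h₁, h₂, h₃, h₄, h₅⟩ => ⟨h₁, h₂, h₃, h₄, h₅⟩⟩

theorem isBMR_of : IsBMR (PresentedGroup.of GenW.s : W) (PresentedGroup.of GenW.t) :=
  (forall_relsW_iff _).1 fun _ => PresentedGroup.lift_of_eq_one

theorem isER_of :
    IsER (PresentedGroup.of GenG.a : G) (PresentedGroup.of GenG.b) (PresentedGroup.of GenG.c) :=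
  (forall_relsG_iff _).1 fun _ => PresentedGroup.lift_of_eq_one

def bmrToER : W →* G :=
  PresentedGroup.toGroup (f := fun
      | .s => PresentedGroup.of GenG.b
      | .t => (PresentedGroup.of GenG.a * PresentedGroup.of GenG.c)⁻¹)
    ((forall_relsW_iff _).2 isER_of.isBMR)

def erToBMR : G →* W :=
  PresentedGroup.toGroup (f := fun
      | .a => (PresentedGroup.of GenW.s * PresentedGroup.of GenW.t * PresentedGroup.of GenW.s *
          PresentedGroup.of GenW.t * PresentedGroup.of GenW.s)⁻¹
      | .b => PresentedGroup.of GenW.s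
      | .c => PresentedGroup.of GenW.t * PresentedGroup.of GenW.s *
          PresentedGroup.of GenW.t * PresentedGroup.of GenW.s)
    ((forall_relsG_iff _).2 isBMR_of.isER)

theorem G20_iso :
    ∃ (φ₁ : W →* G) (φ₂ : G →* W),
      φ₁ (PresentedGroup.of GenW.s) = PresentedGroup.of GenG.b ∧
      φ₁ (PresentedGroup.of GenW.t) =
        (PresentedGroup.of GenG.a * PresentedGroup.of GenG.c)⁻¹ ∧
      φ₂ (PresentedGroup.of GenG.a) =
        (PresentedGroup.of GenW.s * PresentedGroup.of GenW.t * PresentedGroup.of GenW.s *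
          PresentedGroup.of GenW.t * PresentedGroup.of GenW.s)⁻¹ ∧
      φ₂ (PresentedGroup.of GenG.b) = PresentedGroup.of GenW.s ∧
      φ₂ (PresentedGroup.of GenG.c) =
        PresentedGroup.of GenW.t * PresentedGroup.of GenW.s *
          PresentedGroup.of GenW.t * PresentedGroup.of GenW.s ∧
      φ₂.comp φ₁ = MonoidHom.id W ∧
      φ₁.comp φ₂ = MonoidHom.id G := by
  refine ⟨bmrToER, erToBMR, PresentedGroup.toGroup.of _, PresentedGroup.toGroup.of _,
    PresentedGroup.toGroup.of _, PresentedGroup.toGroup.of _, PresentedGroup.toGroup.of _,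
    PresentedGroup.ext ?_, PresentedGroup.ext ?_⟩ <;>
  rintro ⟨⟩ <;>
  simp only [bmrToER, erToBMR, MonoidHom.comp_apply, MonoidHom.id_apply, map_mul, map_inv,
    PresentedGroup.toGroup.of]
  · exact inv_braid_mul_inv isBMR_of.braid
  · rw [isER_of.braid_eq_inv, inv_inv]
  · exact isER_of.inv_mul_mul_inv_mul

end Stmt9
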